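/- Fix d ≥ 2. For n ∈ N, let C_n be the set of all *-connected W ⊆ Z^d such that #W = n and W encloses 0. Then #C_n ≤ n · ((3^d)^{3^d} / (3^d − 1)^{3^d − 1})^n. -/

import Mathlib

open MeasureTheory ProbabilityTheory Filter Set
open scoped ENNReal NNReal

namespace FPPBoundary

/-- Vertices of `ℤ^d`. -/
abbrev V (d : ℕ) := Fin d → ℤ

/-- Nearest-neighbor adjacency in `ℤ^d`. -/
def adj {d : ℕ} (x y : V d) : Prop := (∑ i, |x i - y i|) = 1

/-- `e` is a nearest-neighbor edge of `ℤ^d`. -/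
def IsEdge {d : ℕ} (e : Sym2 (V d)) : Prop := ∃ x y : V d, adj x y ∧ e = s(x, y)

/-- The set of nearest-neighbor edges, as a type. -/
abbrev Edge (d : ℕ) := {e : Sym2 (V d) // IsEdge e}

/-- `γ : Fin (n+1) → V d` is a lattice path from `x` to `y`. -/
def IsPathFrom {d : ℕ} (n : ℕ) (γ : Fin (n + 1) → V d) (x y : V d) : Prop :=
  γ 0 = x ∧ γ (Fin.last n) = y ∧ ∀ i : Fin n, adj (γ i.castSucc) (γ i.succ)

/-- The passage time of a lattice path. -/
noncomputable def pathCost {d : ℕ} (wgt : Sym2 (V d) → ℝ) (n : ℕ)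
    (γ : Fin (n + 1) → V d) : ℝ :=
  ∑ i : Fin n, wgt s(γ i.castSucc, γ i.succ)

/-- The first-passage time `T(x,y)`. -/
noncomputable def T {d : ℕ} (wgt : Sym2 (V d) → ℝ) (x y : V d) : ℝ :=
  sInf {c : ℝ | ∃ n γ, IsPathFrom n γ x y ∧ c = pathCost wgt n γ}

/-- The lattice point `[x]` with `x ∈ [x] + [0,1)^d`. -/
noncomputable def latt {d : ℕ} (x : Fin d → ℝ) : V d := fun i => ⌊x i⌋

/-- The extension of `T` to `ℝ^d × ℝ^d`. -/
noncomputable def Treal {d : ℕ} (wgt : Sym2 (V d) → ℝ) (x y : Fin d → ℝ) : ℝ :=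
  T wgt (latt x) (latt y)

/-- The ball `B(t)`. -/
noncomputable def ball {d : ℕ} (wgt : Sym2 (V d) → ℝ) (t : ℝ) : Set (V d) :=
  {x | T wgt 0 x ≤ t}

/-- The edge boundary `∂ₑ A`. -/
def edgeBoundary {d : ℕ} (A : Set (V d)) : Set (Sym2 (V d)) :=
  {e | ∃ x y : V d, adj x y ∧ x ∈ A ∧ y ∉ A ∧ e = s(x, y)}

/-- The vertex exterior boundary `∂^ext A`. -/
def extVertexBoundary {d : ℕ} (A : Set (V d)) : Set (V d) :=
  {x | x ∉ A ∧ (∃ y ∈ A, adj x y) ∧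
    ∃ γ : ℕ → V d, γ 0 = x ∧ Function.Injective γ ∧
      (∀ n, adj (γ n) (γ (n + 1))) ∧ ∀ n, γ n ∉ A}

/-- The edge exterior boundary `∂ₑ^ext A`. -/
def extEdgeBoundary {d : ℕ} (A : Set (V d)) : Set (Sym2 (V d)) :=
  {e | ∃ x y : V d, adj x y ∧ y ∈ A ∧ x ∈ extVertexBoundary A ∧ e = s(x, y)}

/-- `x` and `y` are joined by a lattice path all of whose edges lie in `O`. -/
def ConnectedIn {d : ℕ} (O : Set (Sym2 (V d))) (x y : V d) : Prop :=
  ∃ n γ, IsPathFrom n γ x y ∧ ∀ i : Fin n, s(γ (Fin.castSucc i), γ i.succ) ∈ O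

/-- The open cluster of `x` for the set `O` of open edges. -/
def cluster {d : ℕ} (O : Set (Sym2 (V d))) (x : V d) : Set (V d) := {y | ConnectedIn O x y}

/-- `c` is an i.i.d. Bernoulli(p) bond configuration under `P`. -/
def IsBernoulliPerc {d : ℕ} {Ω : Type} [MeasurableSpace Ω] (P : Measure Ω) (p : ℝ)
    (c : Ω → Sym2 (V d) → Bool) : Prop :=
  (∀ e : Edge d, Measurable fun ω => c ω e.1) ∧
  iIndepFun (fun (e : Edge d) ω => c ω e.1) P ∧
  ∀ e : Edge d, P {ω | c ω e.1 = true} = ENNReal.ofReal p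

/-- The critical probability of Bernoulli bond percolation on `ℤ^d`. -/
noncomputable def pc (d : ℕ) : ℝ :=
  sSup {p : ℝ | 0 ≤ p ∧ p ≤ 1 ∧
    ∀ (Ω : Type) (_ : MeasurableSpace Ω) (P : Measure Ω), IsProbabilityMeasure P →
      ∀ c : Ω → Sym2 (V d) → Bool, IsBernoulliPerc P p c →
        P {ω | (cluster {e | c ω e = true} 0).Infinite} = 0}

/-- `w` is an i.i.d. family of nonnegative edge-weights with marginal distribution `μ`. -/
def IsIIDWeights {d : ℕ} {Ω : Type} [MeasurableSpace Ω] (P : Measure Ω) (μ : Measure ℝ)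
    (w : Ω → Sym2 (V d) → ℝ) : Prop :=
  (∀ e : Edge d, Measurable fun ω => w ω e.1) ∧
  iIndepFun (fun (e : Edge d) ω => w ω e.1) P ∧
  (∀ e : Edge d, Measure.map (fun ω => w ω e.1) P = μ) ∧
  ∀ (ω) (e : Edge d), 0 ≤ w ω e.1

/-- `Y`: the minimum of the weights of the `2d` edges incident to the origin. -/
noncomputable def Ymin {d : ℕ} (wgt : Sym2 (V d) → ℝ) : ℝ :=
  ⨅ z : {z : V d // adj 0 z}, wgt s(0, z.1)

/-- `E[Y ∧ s]`. -/
noncomputable def EYmin {d : ℕ} {Ω : Type} [MeasurableSpace Ω] (P : Measure Ω)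
    (w : Ω → Sym2 (V d) → ℝ) (s : ℝ) : ℝ :=
  ∫ ω, min (Ymin (w ω)) s ∂P

/-- the distribution function `F_Y` of `Y`. -/
noncomputable def FY {d : ℕ} {Ω : Type} [MeasurableSpace Ω] (P : Measure Ω)
    (w : Ω → Sym2 (V d) → ℝ) (s : ℝ) : ℝ :=
  (P {ω | Ymin (w ω) ≤ s}).toReal

/-- the first coordinate vector. -/
def e1 (d : ℕ) : V d := fun j => if (j : ℕ) = 0 then 1 else 0

/-- `ℓ^∞` norm of a lattice point, as a real number. -/
def linf {d : ℕ} (x : V d) : ℝ := ((Finset.univ.sup fun i => (x i).natAbs : ℕ) : ℝ)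

/-- `ℓ^2` norm on `ℝ^d`. -/
noncomputable def l2 {d : ℕ} (x : Fin d → ℝ) : ℝ := Real.sqrt (∑ i, x i ^ 2)

end FPPBoundary
namespace FPPBoundary

/-- `W` is *-connected. -/
def starConn {d : ℕ} (W : Finset (V d)) : Prop :=
  ∀ u ∈ W, ∀ v ∈ W, ∃ (k : ℕ) (γ : Fin (k + 1) → V d),
    γ 0 = u ∧ γ (Fin.last k) = v ∧ (∀ i, γ i ∈ W) ∧
    ∀ i : Fin k, (Finset.univ.sup fun j => ((γ i.castSucc - γ i.succ) j).natAbs) ≤ 1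

/-- `W` encloses `0`: every infinite vertex-self-avoiding lattice path starting at `0`
meets `W`. -/
def encloses0 {d : ℕ} (W : Finset (V d)) : Prop :=
  ∀ γ : ℕ → V d, γ 0 = 0 → Function.Injective γ →
    (∀ n, adj (γ n) (γ (n + 1))) → ∃ n, γ n ∈ W

/-- `W` is an `α`-bad contour for the weights `wgt`. -/
def badContour {d : ℕ} (α : ℝ) (wgt : Sym2 (V d) → ℝ) (W : Finset (V d)) : Prop :=
  starConn W ∧ encloses0 W ∧
    (W.card : ℝ) ≤ 2 * ({v ∈ (W : Set (V d)) | ∃ u, adj v u ∧ α < wgt s(v, u)}.ncard : ℝ)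

end FPPBoundary
namespace FPPBoundary

/-!
Every *-connected `W` enclosing `0` contains a point `k e₁` with `k < #W`: the rays from `0` along
`±e₁` meet `W`, and a *-path inside `W` between the two meeting points has first coordinates
covering `[0, k]`. Rooted at such a point, `W` is recovered from the record of its breadth-first
exploration by the `3^d` *-moves, i.e. from the `#W - 1` pairs (round `i < #W`, move) that
discovered a new vertex. Hence `#C_n ≤ n · C(3^d n, n - 1) ≤ n · C(3^d n, n)`, and the term
`C(Δn, n) n^n ((Δ - 1) n)^((Δ - 1) n) ≤ (Δn)^(Δn)` of the binomial expansion gives the bound.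
-/

open Relation

section Exploration

variable {α ι : Type*} (step : α → ι → α)

noncomputable def exploreStep (c : ℕ → List α → α → Finset ι) (i : ℕ) (L : List α) : List α :=
  if h : i < L.length then L ++ (c i L L[i]).toList.map (step L[i]) else L

noncomputable def explore (c : ℕ → List α → α → Finset ι) (r : α) : ℕ → List α
  | 0 => [r]
  | i + 1 => exploreStep step c i (explore c r i)

def exploreSlots (c : ℕ → List α → α → Finset ι) (i : ℕ) (L : List α) : Finset ι :=
  if h : i < L.length then c i L L[i] else ∅

variable {step} {c : ℕ → List α → α → Finset ι} {r : α}

lemma prefix_exploreStep (i : ℕ) (L : List α) : L <+: exploreStep step c i L := by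
  unfold exploreStep
  split
  · exact List.prefix_append _ _
  · exact List.prefix_rfl

lemma explore_prefix {i j : ℕ} (hij : i ≤ j) : explore step c r i <+: explore step c r j := by
  induction j, hij using Nat.le_induction with
  | base => exact List.prefix_rfl
  | succ j _ ih => exact ih.trans (prefix_exploreStep _ _)

lemma explore_eq_of_length_le {i j : ℕ} (h : (explore step c r i).length ≤ i) (hij : i ≤ j) :
    explore step c r j = explore step c r i := by
  induction j, hij using Nat.le_induction with
  | base => rfl
  | succ j hij ih => rw [explore, ih, exploreStep, dif_neg (by omega)]

lemma length_exploreStep (i : ℕ) (L : List α) :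
    (exploreStep step c i L).length = L.length + (exploreSlots c i L).card := by
  unfold exploreStep exploreSlots
  split <;> simp

noncomputable def exploreRecord [Fintype ι] (step : α → ι → α) (c : ℕ → List α → α → Finset ι)
    (r : α) (N : ℕ) : Finset (ℕ × ι) :=
  open scoped Classical in
  {p ∈ Finset.range N ×ˢ Finset.univ | p.2 ∈ exploreSlots c p.1 (explore step c r p.1)}

variable [Fintype ι]

noncomputable def replay (S : Finset (ℕ × ι)) : ℕ → List α → α → Finset ι :=
  open scoped Classical in
  fun i _ _ => {a | (i, a) ∈ S}

lemma mem_exploreRecord {N i : ℕ} {a : ι} :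
    (i, a) ∈ exploreRecord step c r N ↔ i < N ∧ a ∈ exploreSlots c i (explore step c r i) := by
  simp [exploreRecord]

lemma card_exploreRecord_add_one (N : ℕ) :
    (exploreRecord step c r N).card + 1 = (explore step c r N).length := by
  classical
  have hcard : (exploreRecord step c r N).card =
      ∑ i ∈ Finset.range N, (exploreSlots c i (explore step c r i)).card := by
    rw [exploreRecord, Finset.card_filter, Finset.sum_product]
    simp
  rw [hcard]
  clear hcard
  induction N with
  | zero => rfl
  | succ N ih => rw [Finset.sum_range_succ, explore, length_exploreStep, ← ih]; ring

lemma explore_replay_exploreRecord {N i : ℕ} (hi : i ≤ N) :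
    explore step (replay (exploreRecord step c r N)) r i = explore step c r i := by
  induction i with
  | zero => rfl
  | succ i ih =>
    rw [explore, explore, ih (by omega), exploreStep, exploreStep]
    split
    · next h =>
      congr 3
      ext a
      simp [replay, mem_exploreRecord, exploreSlots, h, show i < N by omega]
    · rfl

end Exploration

section StepConnected

variable {α ι : Type*} (step : α → ι → α)

def StepIn (W : Finset α) (u v : α) : Prop := v ∈ W ∧ ∃ a, step u a = v

def IsStepConnectedFrom (W : Finset α) (r : α) : Prop :=
  r ∈ W ∧ ∀ v ∈ W, ReflTransGen (StepIn step W) r v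

variable [DecidableEq α] [Fintype ι]

def greedy (W : Finset α) : ℕ → List α → α → Finset ι :=
  fun _ L u => {a | step u a ∈ W ∧ step u a ∉ L}

variable {step} {W : Finset α} {r : α}

lemma mem_greedy {i : ℕ} {L : List α} {u : α} {a : ι} :
    a ∈ greedy step W i L u ↔ step u a ∈ W ∧ step u a ∉ L := by
  simp [greedy]

lemma nodup_explore_greedy (hinj : ∀ u, Function.Injective (step u)) (i : ℕ) :
    (explore step (greedy step W) r i).Nodup := by
  induction i with
  | zero => exact List.nodup_singleton r
  | succ i ih =>
    rw [explore, exploreStep]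
    split
    · refine ih.append ((Finset.nodup_toList _).map (hinj _)) fun x hx hx' => ?_
      obtain ⟨a, ha, rfl⟩ := List.mem_map.1 hx'
      exact (mem_greedy.1 (Finset.mem_toList.1 ha)).2 hx
    · exact ih

lemma mem_of_mem_explore_greedy (hr : r ∈ W) {i : ℕ} {x : α}
    (hx : x ∈ explore step (greedy step W) r i) : x ∈ W := by
  induction i generalizing x with
  | zero => exact (List.mem_singleton.1 hx) ▸ hr
  | succ i ih =>
    rw [explore, exploreStep] at hx
    split at hx
    · rcases List.mem_append.1 hx with hx | hx
      · exact ih hx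
      · obtain ⟨a, ha, rfl⟩ := List.mem_map.1 hx
        exact (mem_greedy.1 (Finset.mem_toList.1 ha)).1
    · exact ih hx

lemma length_explore_greedy_le (hinj : ∀ u, Function.Injective (step u)) (hr : r ∈ W)
    (i : ℕ) : (explore step (greedy step W) r i).length ≤ W.card := by
  rw [← List.toFinset_card_of_nodup (nodup_explore_greedy hinj i)]
  exact Finset.card_le_card fun x hx => mem_of_mem_explore_greedy hr (List.mem_toFinset.1 hx)

lemma step_mem_explore_greedy (hinj : ∀ u, Function.Injective (step u)) (hr : r ∈ W)
    {u : α} (hu : u ∈ explore step (greedy step W) r W.card) {a : ι} (ha : step u a ∈ W) :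
    step u a ∈ explore step (greedy step W) r W.card := by
  set E := explore step (greedy step W) r
  obtain ⟨p, hp, rfl⟩ := List.getElem_of_mem hu
  have hlen : (E W.card).length ≤ W.card := length_explore_greedy_le hinj hr W.card
  -- the `p`-th vertex has already been processed, otherwise the exploration would have stopped
  have hpp : p < (E p).length := by
    by_contra! h
    rw [show E W.card = E p from explore_eq_of_length_le h (by omega)] at hp
    omega
  rw [← (explore_prefix (by omega : p ≤ W.card)).getElem hpp] at ha ⊢
  by_cases hold : step (E p)[p] a ∈ E p
  · exact (explore_prefix (by omega)).subset hold
  · refine (explore_prefix (by omega : p + 1 ≤ W.card)).subset ?_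
    rw [explore, exploreStep, dif_pos hpp]
    exact List.mem_append_right _
      (List.mem_map_of_mem (Finset.mem_toList.2 (mem_greedy.2 ⟨ha, hold⟩)))

lemma toFinset_explore_greedy (hinj : ∀ u, Function.Injective (step u))
    (hW : IsStepConnectedFrom step W r) :
    (explore step (greedy step W) r W.card).toFinset = W := by
  refine Finset.Subset.antisymm
    (fun x hx => mem_of_mem_explore_greedy hW.1 (List.mem_toFinset.1 hx))
    fun v hv => List.mem_toFinset.2 ?_
  have hrv := hW.2 v hv
  clear hv
  induction hrv with
  | refl => exact (explore_prefix (Nat.zero_le _)).subset (List.mem_singleton_self r)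
  | tail _ huv ih =>
    obtain ⟨hvW, a, rfl⟩ := huv
    exact step_mem_explore_greedy hinj hW.1 ih hvW

lemma length_explore_greedy (hinj : ∀ u, Function.Injective (step u))
    (hW : IsStepConnectedFrom step W r) :
    (explore step (greedy step W) r W.card).length = W.card := by
  conv_rhs => rw [← toFinset_explore_greedy hinj hW]
  exact (List.toFinset_card_of_nodup (nodup_explore_greedy hinj _)).symm

omit [DecidableEq α] in
theorem encard_setOf_isStepConnectedFrom_le (hinj : ∀ u, Function.Injective (step u))
    (r : α) (n : ℕ) :
    {W : Finset α | IsStepConnectedFrom step W r ∧ W.card = n}.encard ≤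
      (n * Fintype.card ι).choose (n - 1) := by
  classical
  let codes := (Finset.range n ×ˢ (Finset.univ : Finset ι)).powersetCard (n - 1)
  let decode (S : Finset (ℕ × ι)) : Finset α := (explore step (replay S) r n).toFinset
  have hsub : {W : Finset α | IsStepConnectedFrom step W r ∧ W.card = n} ⊆ decode '' codes := by
    rintro W ⟨hW, rfl⟩
    refine ⟨exploreRecord step (greedy step W) r W.card, Finset.mem_powersetCard.2
      ⟨Finset.filter_subset _ _, ?_⟩, ?_⟩
    · have := card_exploreRecord_add_one (step := step) (c := greedy step W) (r := r) W.card
      rw [length_explore_greedy hinj hW] at this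
      omega
    · simp only [decode, explore_replay_exploreRecord le_rfl, toFinset_explore_greedy hinj hW]
  calc _ ≤ (decode '' codes).encard := Set.encard_mono hsub
    _ ≤ (codes : Set (Finset (ℕ × ι))).encard := Set.encard_image_le _ _
    _ = _ := by simp [codes, Set.encard_coe_eq_coe_finsetCard]

end StepConnected

lemma reflTransGen_of_fin_path {α : Type*} {R : α → α → Prop} {k : ℕ} (γ : Fin (k + 1) → α)
    (hγ : ∀ i : Fin k, R (γ i.castSucc) (γ i.succ)) : ReflTransGen R (γ 0) (γ (Fin.last k)) := by
  induction k with
  | zero => exact ReflTransGen.refl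
  | succ k ih =>
    exact (ih (fun i => γ i.castSucc) fun i => hγ i.castSucc).tail (hγ (Fin.last k))

/-- A discrete intermediate value theorem. -/
lemma exists_mem_eq_of_reflTransGen {α : Type*} {R : α → α → Prop} {W : Set α} {f : α → ℤ}
    (hR : ∀ x y, R x y → y ∈ W ∧ |f y - f x| ≤ 1) {a b : α} (ha : a ∈ W)
    (hab : ReflTransGen R a b) {t : ℤ} (hbt : f b ≤ t) (hta : t ≤ f a) : ∃ w ∈ W, f w = t := by
  induction hab with
  | refl => exact ⟨a, ha, le_antisymm hbt hta⟩
  | @tail c b _ hcb ih =>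
    by_cases hct : f c ≤ t
    · exact ih hct
    · obtain ⟨hbW, hfb⟩ := hR c b hcb
      exact ⟨b, hbW, by rw [abs_le] at hfb; omega⟩

section Lattice

variable {d : ℕ}

def starMove (u : V d) (a : Fin d → Fin 3) : V d := fun i => u i + a i - 1

lemma starMove_injective (u : V d) : Function.Injective (starMove u) := by
  intro a b h
  funext i
  have := congrFun h i
  simp only [starMove, sub_left_inj, add_right_inj] at this
  exact Fin.ext (by exact_mod_cast this)

lemma exists_starMove_eq {u v : V d} (h : ∀ i, ((u - v) i).natAbs ≤ 1) :
    ∃ a, starMove u a = v := by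
  have hlt (i : Fin d) : (v i - u i + 1).toNat < 3 := by
    have := h i
    simp only [Pi.sub_apply] at this
    omega
  refine ⟨fun i => ⟨_, hlt i⟩, funext fun i => ?_⟩
  have := h i
  simp only [Pi.sub_apply] at this
  simp only [starMove]
  omega

lemma abs_starMove_sub_le (u : V d) (a : Fin d → Fin 3) (i : Fin d) :
    |starMove u a i - u i| ≤ 1 := by
  have := (a i).isLt
  simp only [starMove, abs_le]
  omega

lemma isStepConnectedFrom_starMove {W : Finset (V d)} (hW : starConn W) {r : V d} (hr : r ∈ W) :
    IsStepConnectedFrom starMove W r := by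
  refine ⟨hr, fun v hv => ?_⟩
  obtain ⟨k, γ, rfl, rfl, hγW, hγ⟩ := hW _ hr v hv
  exact reflTransGen_of_fin_path γ fun i =>
    ⟨hγW _, exists_starMove_eq fun j => Finset.sup_le_iff.1 (hγ i) j (Finset.mem_univ j)⟩

lemma adj_smul_e1_add (hd : 0 < d) {s : ℤ} (hs : |s| = 1) (t : ℤ) :
    adj (t • e1 d) ((t + s) • e1 d) := by
  unfold adj
  rw [Finset.sum_eq_single ⟨0, hd⟩]
  · simp [e1, hs]
  · intro j _ hj
    have : (j : ℕ) ≠ 0 := fun h => hj (Fin.ext h)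
    simp [e1, this]
  · simp

lemma exists_smul_e1_mem (hd : 0 < d) {W : Finset (V d)} (hW : encloses0 W) {s : ℤ}
    (hs : |s| = 1) : ∃ k : ℕ, (s * k) • e1 d ∈ W := by
  have he1 : e1 d ≠ 0 := fun h => by simpa [e1] using congrFun h ⟨0, hd⟩
  have hs0 : s ≠ 0 := by rintro rfl; simp at hs
  refine hW (fun k => (s * k) • e1 d) (by simp) (fun m n hmn => ?_) fun k => ?_
  · simpa [hs0] using smul_left_injective ℤ he1 hmn
  · simpa [mul_add, add_comm] using adj_smul_e1_add hd hs (s * k)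

lemma exists_natCast_smul_e1_mem (hd : 0 < d) {W : Finset (V d)} (hconn : starConn W)
    (hW : encloses0 W) : ∃ k : ℕ, k < W.card ∧ (k : ℤ) • e1 d ∈ W := by
  obtain ⟨kp, hkp⟩ := exists_smul_e1_mem hd hW (s := 1) (by simp)
  obtain ⟨kn, hkn⟩ := exists_smul_e1_mem hd hW (s := -1) (by simp)
  rw [one_mul] at hkp
  refine ⟨kp, ?_, hkp⟩
  let π : V d → ℤ := fun v => v ⟨0, hd⟩
  have hπ (t : ℤ) : π (t • e1 d) = t := by simp [π, e1]
  have hcover : Finset.Icc 0 (kp : ℤ) ⊆ W.image π := by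
    intro t ht
    rw [Finset.mem_Icc] at ht
    obtain ⟨w, hw, rfl⟩ := exists_mem_eq_of_reflTransGen (W := (W : Set (V d))) (f := π) (t := t)
      (fun x y ⟨hy, a, hxy⟩ => ⟨hy, hxy ▸ abs_starMove_sub_le x a _⟩) hkp
      ((isStepConnectedFrom_starMove hconn hkp).2 _ hkn) (by rw [hπ]; omega) (by rw [hπ]; omega)
    exact Finset.mem_image_of_mem π hw
  have := (Finset.card_le_card hcover).trans Finset.card_image_le
  simp only [Int.card_Icc, sub_zero] at this
  omega

lemma encard_setOf_contour_le (hd : 0 < d) (n : ℕ) :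
    {W : Finset (V d) | starConn W ∧ encloses0 W ∧ W.card = n}.encard ≤
      n * (n * 3 ^ d).choose (n - 1) := by
  let rooted (k : ℕ) : Set (Finset (V d)) :=
    {W | IsStepConnectedFrom starMove W ((k : ℤ) • e1 d) ∧ W.card = n}
  calc _ ≤ (⋃ k ∈ Finset.range n, rooted k).encard := by
        refine Set.encard_mono fun W ⟨hconn, hW, hcard⟩ => ?_
        obtain ⟨k, hk, hkW⟩ := exists_natCast_smul_e1_mem hd hconn hW
        exact Set.mem_biUnion (Finset.mem_coe.2 (Finset.mem_range.2 (hcard ▸ hk)))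
          ⟨isStepConnectedFrom_starMove hconn hkW, hcard⟩
    _ ≤ ∑ k ∈ Finset.range n, (rooted k).encard := Finset.set_encard_biUnion_le _ _
    _ ≤ n * (n * 3 ^ d).choose (n - 1) := by
        refine (Finset.sum_le_card_nsmul (Finset.range n) _ _ fun k _ =>
          encard_setOf_isStepConnectedFrom_le starMove_injective ((k : ℤ) • e1 d) n).trans ?_
        simp

end Lattice

section Binomial

lemma choose_mul_pow_mul_pow_le (a b : ℕ) :
    (a + b).choose a * (a ^ a * b ^ b) ≤ (a + b) ^ (a + b) := by
  have hterm := Finset.single_le_sum (f := fun k => a ^ k * b ^ (a + b - k) * (a + b).choose k)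
    (fun k _ => Nat.zero_le _) (Finset.mem_range.2 (by omega : a < a + b + 1))
  have hexpand := add_pow a b (a + b)
  simp only [Nat.cast_id] at hexpand
  rw [← hexpand] at hterm
  simpa [mul_comm, mul_left_comm, mul_assoc] using hterm

lemma choose_mul_pow_le_pow (b n : ℕ) :
    ((b + 1) * n).choose n * b ^ (b * n) ≤ (b + 1) ^ ((b + 1) * n) := by
  rcases Nat.eq_zero_or_pos n with rfl | hn
  · simp
  have h := choose_mul_pow_mul_pow_le n (b * n)
  rw [show n + b * n = (b + 1) * n by ring] at h
  refine Nat.le_of_mul_le_mul_right ?_ (pow_pos hn ((b + 1) * n))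
  calc ((b + 1) * n).choose n * b ^ (b * n) * n ^ ((b + 1) * n)
      = ((b + 1) * n).choose n * (n ^ n * (b * n) ^ (b * n)) := by ring
    _ ≤ ((b + 1) * n) ^ ((b + 1) * n) := h
    _ = (b + 1) ^ ((b + 1) * n) * n ^ ((b + 1) * n) := mul_pow _ _ _

lemma choose_mul_pred_le_pow (Δ n : ℕ) (hΔ : 2 ≤ Δ) :
    ((n * Δ).choose (n - 1) : ℝ) ≤ ((Δ : ℝ) ^ Δ / ((Δ : ℝ) - 1) ^ (Δ - 1)) ^ n := by
  obtain ⟨b, rfl⟩ : ∃ b, Δ = b + 1 := ⟨Δ - 1, by omega⟩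
  have hmono : (n * (b + 1)).choose (n - 1) ≤ ((b + 1) * n).choose n := by
    rw [mul_comm]
    rcases n with _ | m
    · simp
    · refine Nat.choose_le_succ_of_lt_half_left ?_
      have : 2 * (m + 1) ≤ (b + 1) * (m + 1) := Nat.mul_le_mul_right _ hΔ
      omega
  simp only [Nat.cast_add, Nat.cast_one, add_sub_cancel_right, add_tsub_cancel_right]
  rw [div_pow, ← pow_mul, ← pow_mul, le_div_iff₀ (pow_pos (Nat.cast_pos.2 (by omega)) _)]
  calc ((n * (b + 1)).choose (n - 1) : ℝ) * (b : ℝ) ^ (b * n)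
      ≤ (((b + 1) * n).choose n : ℝ) * (b : ℝ) ^ (b * n) := by gcongr
    _ ≤ ((b : ℝ) + 1) ^ ((b + 1) * n) := by exact_mod_cast choose_mul_pow_le_pow b n

end Binomial

/-- Lemma 3.4: the number of *-connected sets of cardinality `n` enclosing `0` is at most
`n (3^d)^{3^d} / (3^d - 1)^{3^d - 1})^n`. -/
theorem number_of_contours (d : ℕ) (hd : 2 ≤ d) (n : ℕ) :
    ({W : Finset (V d) | starConn W ∧ encloses0 W ∧ W.card = n}.encard : ℝ≥0∞)
      ≤ ENNReal.ofReal
          ((n : ℝ) * (((3 : ℝ) ^ d) ^ (3 ^ d) / ((3 : ℝ) ^ d - 1) ^ (3 ^ d - 1)) ^ n) := by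
  have hcount := encard_setOf_contour_le (by omega : 0 < d) n
  calc (_ : ℝ≥0∞) ≤ ((n * (n * 3 ^ d).choose (n - 1) : ℕ) : ℝ≥0∞) := by
        exact_mod_cast ENat.toENNReal_le.2 hcount
    _ = ENNReal.ofReal ((n : ℝ) * ((n * 3 ^ d).choose (n - 1) : ℝ)) := by
        rw [← ENNReal.ofReal_natCast]; push_cast; rfl
    _ ≤ _ := by
        gcongr
        exact_mod_cast choose_mul_pred_le_pow (3 ^ d) n
          (le_trans (by norm_num) (Nat.pow_le_pow_right (by norm_num) hd))

end FPPBoundary
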